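/- For ε ∈ (0,1) define f_ε : (0,1] → ℝ by f_ε(r) = ε for r ∈ (0,1/2] and f_ε(r) = 1 for r ∈ (1/2,1]. Then ∫₀¹ r³ f_ε(r)² / (∫₀^r 2s f_ε(s) ds) dr ≥ ∫_{1/2}^1 r³ / (ε/4 + r² − 1/4) dr, and this quantity tends to +∞ as ε → 0⁺. Consequently, the bending energy ∫_{B(0,1)} |∇²(v_{f_ε}∘|·|)|² of the radial solution v_{f_ε} of det∇²v = f_ε(|x|) tends to +∞ as ε → 0⁺, whereas the function v(x) = |x|²/2 satisfies det∇²v = 1 ≥ f_ε and ∫_{B(0,1)} |∇²v|² = 2π; hence for small ε the radial constrained solution v_{f_ε} is not a minimizer of the relaxed problem with constraint det∇²v ≥ f_ε. -/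

import Mathlib

/-!
For a radial function `v(x) = φ(|x|)` on the plane, `|∇²v|² = φ''(r)² + (φ'(r)/r)²`, and polar
coordinates turn the bending energy on `B(0,1)` into `2π ∫₀¹ r (φ''² + (φ'/r)²) dr`. For
`φ = v_{f_ε}` we have `φ' = √G` with `G(r) = ∫₀ʳ 2t f_ε(t) dt`, hence `r φ''² = r³ f_ε² / G`. On
`(1/2, 1)`, `G(r) = ε/4 + r² - 1/4` degenerates at `r = 1/2` as `ε → 0`, and
`∫_{1/2}^1 r³ / G = 3/8 + (1 - ε)/8 · log((3 + ε)/ε)` blows up like `log(1/ε)/8`, while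
`|x|²/2` has Hessian the identity, hence energy `2π`.
-/

noncomputable section

open Real MeasureTheory

/-- The plane ℝ². -/
abbrev E2 : Type := EuclideanSpace ℝ (Fin 2)

/-- Partial derivative in the `i`-th coordinate direction. -/
def pd (i : Fin 2) (f : E2 → ℝ) (x : E2) : ℝ :=
  fderiv ℝ f x (EuclideanSpace.single i 1)

/-- Hessian of a scalar function on ℝ². -/
def hess (f : E2 → ℝ) (x : E2) : Fin 2 → Fin 2 → ℝ :=
  fun i j => pd i (pd j f) x

/-- Determinant of the Hessian. -/
def hessDet (f : E2 → ℝ) (x : E2) : ℝ :=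
  hess f x 0 0 * hess f x 1 1 - hess f x 0 1 * hess f x 1 0

/-- Squared Frobenius norm of a 2×2 matrix. -/
def frob2 (M : Fin 2 → Fin 2 → ℝ) : ℝ := ∑ i : Fin 2, ∑ j : Fin 2, (M i j) ^ 2

/-- The radial profile `v_f(r) = ∫₀ʳ (∫₀ˢ 2t f(t) dt)^{1/2} ds`. -/
def vf (f : ℝ → ℝ) (r : ℝ) : ℝ :=
  ∫ s in Set.Ioo (0 : ℝ) r, Real.sqrt (∫ t in Set.Ioo (0 : ℝ) s, 2 * t * f t)

/-- The step function `f_ε = ε·χ_{(0,1/2]} + χ_{(1/2,1]}`. -/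
def feps (ε : ℝ) (r : ℝ) : ℝ := if r ≤ 1 / 2 then ε else 1

open Set Filter Topology

section RadialCalculus

theorem hasFDerivAt_norm {F : Type*} [NormedAddCommGroup F] [InnerProductSpace ℝ F] {x : F}
    (hx : x ≠ 0) : HasFDerivAt (fun y : F => ‖y‖) (‖x‖⁻¹ • innerSL ℝ x) x := by
  have hx' : ‖x‖ ≠ 0 := norm_ne_zero_iff.mpr hx
  have h := (hasStrictFDerivAt_norm_sq x).hasFDerivAt.sqrt (pow_ne_zero 2 hx')
  simp only [Real.sqrt_sq (norm_nonneg _)] at h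
  convert h using 1
  ext v
  simp only [smul_apply, innerSL_apply_apply, smul_eq_mul, two_smul,
    add_apply]
  field_simp
  ring

theorem HasFDerivAt.pd_eq {f : E2 → ℝ} {f' : E2 →L[ℝ] ℝ} {x : E2} (h : HasFDerivAt f f' x)
    (i : Fin 2) : pd i f x = f' (EuclideanSpace.single i 1) := by
  rw [pd, h.fderiv]

theorem innerSL_single (x : E2) (i : Fin 2) :
    innerSL ℝ x (EuclideanSpace.single i 1) = x i := by
  simp [EuclideanSpace.inner_single_right]

theorem pd_radial {φ : ℝ → ℝ} {φ' : ℝ} {x : E2} (hx : x ≠ 0) (hφ : HasDerivAt φ φ' ‖x‖)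
    (j : Fin 2) : pd j (fun y => φ ‖y‖) x = φ' / ‖x‖ * x j := by
  refine ((hφ.comp_hasFDerivAt x (hasFDerivAt_norm hx)).pd_eq j).trans ?_
  simp only [smul_apply, innerSL_single, smul_eq_mul]
  ring

theorem hess_radial {φ φ' : ℝ → ℝ} {φ'' : ℝ} {x : E2} (hx : x ≠ 0)
    (hφ : ∀ s, 0 < s → HasDerivAt φ (φ' s) s) (hφ' : HasDerivAt φ' φ'' ‖x‖) (i j : Fin 2) :
    hess (fun y => φ ‖y‖) x i j =
      φ' ‖x‖ / ‖x‖ * (if i = j then 1 else 0) + (φ'' - φ' ‖x‖ / ‖x‖) / ‖x‖ ^ 2 * x i * x j := by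
  have hr : 0 < ‖x‖ := norm_pos_iff.mpr hx
  have hpd : pd j (fun y => φ ‖y‖) =ᶠ[𝓝 x] fun y => φ' ‖y‖ / ‖y‖ * y j := by
    filter_upwards [isOpen_compl_singleton.mem_nhds hx] with y (hy : y ≠ 0)
    exact pd_radial hy (hφ _ (norm_pos_iff.mpr hy)) j
  have hψ : HasDerivAt (fun s => φ' s / s) ((φ'' * ‖x‖ - φ' ‖x‖ * 1) / ‖x‖ ^ 2) ‖x‖ :=
    hφ'.div (hasDerivAt_id _) hr.ne'
  have hD := (hψ.comp_hasFDerivAt x (hasFDerivAt_norm hx)).mul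
    (EuclideanSpace.proj j : E2 →L[ℝ] ℝ).hasFDerivAt
  rw [hess, pd, hpd.fderiv_eq, ← pd]
  refine (hD.pd_eq i).trans ?_
  simp only [add_apply, smul_apply, smul_eq_mul,
    innerSL_single, Function.comp_apply]
  simp [eq_comm]
  field_simp

theorem frob2_hess_radial {φ φ' : ℝ → ℝ} {φ'' : ℝ} {x : E2} (hx : x ≠ 0)
    (hφ : ∀ s, 0 < s → HasDerivAt φ (φ' s) s) (hφ' : HasDerivAt φ' φ'' ‖x‖) :
    frob2 (hess (fun y => φ ‖y‖) x) = φ'' ^ 2 + (φ' ‖x‖ / ‖x‖) ^ 2 := by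
  have hr : ‖x‖ ≠ 0 := norm_ne_zero_iff.mpr hx
  have hR : x 0 ^ 2 + x 1 ^ 2 = ‖x‖ ^ 2 := by
    simp [EuclideanSpace.norm_sq_eq, Fin.sum_univ_two]
  set a := φ' ‖x‖ / ‖x‖
  set b := (φ'' - a) / ‖x‖ ^ 2
  have hb : b * ‖x‖ ^ 2 = φ'' - a := by simp only [b]; field_simp
  simp only [frob2, Fin.sum_univ_two, hess_radial hx hφ hφ']
  norm_num
  linear_combination (2 * a * b + b ^ 2 * (x 0 ^ 2 + x 1 ^ 2 + ‖x‖ ^ 2)) * hR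
    + (φ'' + a + b * ‖x‖ ^ 2) * hb

end RadialCalculus

theorem pd_half_norm_sq (j : Fin 2) : pd j (fun y : E2 => ‖y‖ ^ 2 / 2) = fun x => x j := by
  funext x
  have h : HasFDerivAt (fun y : E2 => ‖y‖ ^ 2) _ x := (hasStrictFDerivAt_norm_sq x).hasFDerivAt
  simp_rw [div_eq_mul_inv]
  refine ((h.mul_const 2⁻¹).pd_eq j).trans ?_
  simp [innerSL_single]

theorem hess_half_norm_sq (x : E2) (i j : Fin 2) :
    hess (fun y : E2 => ‖y‖ ^ 2 / 2) x i j = if i = j then 1 else 0 := by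
  rw [hess, pd_half_norm_sq]
  refine ((EuclideanSpace.proj j : E2 →L[ℝ] ℝ).hasFDerivAt.pd_eq i).trans ?_
  simp [eq_comm]

theorem hessDet_half_norm_sq (x : E2) : hessDet (fun y : E2 => ‖y‖ ^ 2 / 2) x = 1 := by
  simp [hessDet, hess_half_norm_sq]

theorem integral_ball_frob2_hess_half_norm_sq :
    ∫ x in Metric.ball (0 : E2) 1, frob2 (hess (fun y : E2 => ‖y‖ ^ 2 / 2) x) = 2 * π := by
  simp [frob2, hess_half_norm_sq, measureReal_def, pi_nonneg, mul_comm]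

theorem integral_ball_fun_norm (F : ℝ → ℝ) (R : ℝ) :
    ∫ x in Metric.ball (0 : E2) R, F ‖x‖ = 2 * π * ∫ r in Ioo 0 R, r * F r := by
  have hind : (Metric.ball (0 : E2) R).indicator (fun x => F ‖x‖)
      = fun x => (Iio R).indicator F ‖x‖ := by
    funext x; by_cases h : ‖x‖ < R <;> simp [h]
  rw [← integral_indicator measurableSet_ball, hind,
    integral_fun_norm_addHaar volume ((Iio R).indicator F)]
  simp only [finrank_euclideanSpace, Fintype.card_fin, measureReal_def,
    EuclideanSpace.volume_ball_fin_two]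
  have hmul : (fun y => y * (Iio R).indicator F y) = (Iio R).indicator (fun y => y * F y) := by
    funext y; exact (indicator_mul_right _ (fun y => y) F).symm
  simp only [Nat.reduceSub, pow_one, smul_eq_mul, hmul,
    setIntegral_indicator measurableSet_Iio, Ioi_inter_Iio]
  simp [pi_nonneg, mul_assoc]

section Feps

variable {ε : ℝ}

theorem measurable_feps (ε : ℝ) : Measurable (feps ε) :=
  Measurable.ite measurableSet_Iic measurable_const measurable_const

theorem feps_le_one (hε : ε ≤ 1) (r : ℝ) : feps ε r ≤ 1 := by
  unfold feps; split_ifs <;> linarith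

theorem feps_pos (hε : 0 < ε) (r : ℝ) : 0 < feps ε r := by
  unfold feps; split_ifs <;> linarith

theorem intervalIntegrable_feps (ε a b : ℝ) : IntervalIntegrable (feps ε) volume a b := by
  refine intervalIntegrable_iff.2 <| Measure.integrableOn_of_bounded (M := max |ε| 1)
    measure_Ioc_lt_top.ne (measurable_feps ε).aestronglyMeasurable (ae_of_all _ fun r => ?_)
  unfold feps; split_ifs <;> simp

def Geps (ε s : ℝ) : ℝ := if s ≤ 1 / 2 then ε * s ^ 2 else ε / 4 + s ^ 2 - 1 / 4

theorem continuous_Geps (ε : ℝ) : Continuous (Geps ε) :=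
  Continuous.if_le (by fun_prop) (by fun_prop) continuous_id continuous_const
    fun s (hs : s = 1 / 2) => by rw [hs]; ring

theorem hasDerivAt_Geps {s : ℝ} (hs : s ≠ 1 / 2) : HasDerivAt (Geps ε) (2 * s * feps ε s) s := by
  rcases hs.lt_or_gt with hs | hs
  · have hG : Geps ε =ᶠ[𝓝 s] fun t => ε * t ^ 2 := by
      filter_upwards [Iio_mem_nhds hs] with t ht
      exact if_pos (le_of_lt ht)
    rw [feps, if_pos hs.le]
    refine HasDerivAt.congr_of_eventuallyEq ?_ hG
    exact ((hasDerivAt_pow 2 s).const_mul ε).congr_deriv (by norm_num; ring)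
  · have hG : Geps ε =ᶠ[𝓝 s] fun t => ε / 4 + t ^ 2 - 1 / 4 := by
      filter_upwards [Ioi_mem_nhds hs] with t ht
      exact if_neg (not_le.mpr ht)
    rw [feps, if_neg (not_le.mpr hs)]
    refine HasDerivAt.congr_of_eventuallyEq ?_ hG
    exact (((hasDerivAt_pow 2 s).const_add (ε / 4)).sub_const (1 / 4)).congr_deriv
      (by norm_num)

theorem Geps_pos (hε : 0 < ε) {s : ℝ} (hs : 0 < s) : 0 < Geps ε s := by
  unfold Geps; split_ifs with h
  · positivity
  · nlinarith

theorem mul_sq_le_Geps (hε : ε ≤ 1) (s : ℝ) : ε * s ^ 2 ≤ Geps ε s := by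
  unfold Geps; split_ifs with h
  · rfl
  · have hs : 1 / 4 ≤ s ^ 2 := by nlinarith
    nlinarith

theorem Geps_le_sq (hε : ε ≤ 1) (s : ℝ) : Geps ε s ≤ s ^ 2 := by
  unfold Geps; split_ifs with h
  · nlinarith [sq_nonneg s]
  · linarith

theorem setIntegral_Ioo_two_mul_feps (ε : ℝ) {s : ℝ} (hs : 0 < s) :
    ∫ t in Ioo 0 s, 2 * t * feps ε t = Geps ε s := by
  rw [← integral_Ioc_eq_integral_Ioo, ← intervalIntegral.integral_of_le hs.le,
    integral_eq_of_hasDerivAt_off_countable_of_le (Geps ε) _ hs.le (countable_singleton (1 / 2))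
      (continuous_Geps ε).continuousOn (fun t ht => hasDerivAt_Geps ht.2)
      ((intervalIntegrable_feps ε 0 s).continuousOn_mul (by fun_prop))]
  simp [Geps]

theorem vf_feps (ε : ℝ) {r : ℝ} (hr : 0 ≤ r) :
    vf (feps ε) r = ∫ s in 0..r, √(Geps ε s) := by
  rw [vf, intervalIntegral.integral_of_le hr, integral_Ioc_eq_integral_Ioo]
  exact setIntegral_congr_fun measurableSet_Ioo fun s hs => by
    rw [setIntegral_Ioo_two_mul_feps ε hs.1]

theorem hasDerivAt_sqrt_Geps (hε : 0 < ε) {s : ℝ} (hs : 0 < s) (hs' : s ≠ 1 / 2) :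
    HasDerivAt (fun t => √(Geps ε t)) (s * feps ε s / √(Geps ε s)) s := by
  convert (hasDerivAt_Geps hs').sqrt (Geps_pos hε hs).ne' using 1
  ring

end Feps

section Energy

variable {ε : ℝ}

/-- `|∇²v|² = v''² + (v'/r)²` for the radial profile `v = v_{f_ε}`, as a function of `r`. -/
def bendingDensity (ε r : ℝ) : ℝ := (r * feps ε r) ^ 2 / Geps ε r + Geps ε r / r ^ 2

theorem frob2_hess_vf_feps (hε : 0 < ε) {x : E2} (hx : x ≠ 0) (hx' : ‖x‖ ≠ 1 / 2) :
    frob2 (hess (fun y => vf (feps ε) ‖y‖) x) = bendingDensity ε ‖x‖ := by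
  have hv : (fun y : E2 => vf (feps ε) ‖y‖) = fun y => ∫ s in 0..‖y‖, √(Geps ε s) :=
    funext fun y => vf_feps ε (norm_nonneg y)
  have hr : 0 < ‖x‖ := norm_pos_iff.mpr hx
  rw [hv, frob2_hess_radial hx
    (fun s _ => ((continuous_Geps ε).sqrt.integral_hasStrictDerivAt 0 s).hasDerivAt)
    (hasDerivAt_sqrt_Geps hε hr hx'), bendingDensity, div_pow, div_pow,
    sq_sqrt (Geps_pos hε hr).le]

theorem integral_ball_frob2_hess_vf_feps (hε : 0 < ε) :
    ∫ x in Metric.ball (0 : E2) 1, frob2 (hess (fun y => vf (feps ε) ‖y‖) x)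
      = 2 * π * ∫ r in Ioo 0 1, r * bendingDensity ε r := by
  rw [← integral_ball_fun_norm]
  -- the radial formula fails only at the origin (`sphere 0 0`) and where `f_ε` jumps
  have hnull : volume (Metric.sphere (0 : E2) 0 ∪ Metric.sphere 0 (1 / 2)) = 0 :=
    measure_union_null (Measure.addHaar_sphere volume 0 0) (Measure.addHaar_sphere volume 0 _)
  refine setIntegral_congr_ae measurableSet_ball ?_
  filter_upwards [compl_mem_ae_iff.mpr hnull] with x hx _
  simp only [mem_compl_iff, mem_union, mem_sphere_zero_iff_norm, norm_eq_zero, not_or] at hx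
  exact frob2_hess_vf_feps hε hx.1 hx.2

theorem measurable_bendingDensity (ε : ℝ) : Measurable (bendingDensity ε) := by
  have := measurable_feps ε
  have := (continuous_Geps ε).measurable
  unfold bendingDensity
  fun_prop

theorem bendingDensity_nonneg (hε : 0 < ε) {r : ℝ} (hr : 0 < r) : 0 ≤ bendingDensity ε r := by
  have := Geps_pos hε hr
  unfold bendingDensity
  positivity

theorem mul_bendingDensity_le (hε : 0 < ε) (hε1 : ε ≤ 1) {r : ℝ} (hr : r ∈ Ioo (0 : ℝ) 1) :
    r * bendingDensity ε r ≤ 1 / ε + 1 := by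
  obtain ⟨hr0, hr1⟩ := hr
  have hf : (r * feps ε r) ^ 2 ≤ r ^ 2 := by
    rw [mul_pow]
    exact mul_le_of_le_one_right (sq_nonneg r)
      (pow_le_one₀ (feps_pos hε r).le (feps_le_one hε1 r))
  have h1 : (r * feps ε r) ^ 2 / Geps ε r ≤ 1 / ε := by
    rw [div_le_div_iff₀ (Geps_pos hε hr0) hε]
    linarith [mul_le_mul_of_nonneg_right hf hε.le, mul_sq_le_Geps hε1 r]
  have h2 : Geps ε r / r ^ 2 ≤ 1 := div_le_one_of_le₀ (Geps_le_sq hε1 r) (by positivity)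
  have h3 := bendingDensity_nonneg hε hr0
  rw [bendingDensity] at h3 ⊢
  nlinarith

theorem integrableOn_mul_bendingDensity (hε : 0 < ε) (hε1 : ε ≤ 1) :
    IntegrableOn (fun r => r * bendingDensity ε r) (Ioo 0 1) := by
  refine Measure.integrableOn_of_bounded (M := 1 / ε + 1) (by simp)
    (measurable_id.mul (measurable_bendingDensity ε)).aestronglyMeasurable ?_
  filter_upwards [ae_restrict_mem measurableSet_Ioo] with r hr
  rw [Real.norm_of_nonneg (mul_nonneg hr.1.le (bendingDensity_nonneg hε hr.1))]
  exact mul_bendingDensity_le hε hε1 hr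

end Energy

section LowerBound

variable {ε : ℝ}

theorem integral_cube_div_eq (hε : 0 < ε) :
    ∫ r in Ioo (1 / 2 : ℝ) 1, r ^ 3 / (ε / 4 + r ^ 2 - 1 / 4)
      = 3 / 8 + (1 - ε) / 8 * (log (3 + ε) - log ε) := by
  have hden : ∀ r ∈ uIcc (1 / 2 : ℝ) 1, 0 < 4 * r ^ 2 - 1 + ε := by
    intro r hr
    rw [uIcc_of_le (by norm_num)] at hr
    nlinarith [hr.1]
  have hF : ∀ r ∈ uIcc (1 / 2 : ℝ) 1,
      HasDerivAt (fun r => r ^ 2 / 2 + (1 - ε) / 8 * log (4 * r ^ 2 - 1 + ε))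
        (r ^ 3 / (ε / 4 + r ^ 2 - 1 / 4)) r := by
    intro r hr
    have h := (((hasDerivAt_pow 2 r).const_mul 4).sub_const 1).add_const ε
    refine (((hasDerivAt_pow 2 r).div_const 2).add
      ((h.log (hden r hr).ne').const_mul ((1 - ε) / 8))).congr_deriv ?_
    have h4 : 4 * r ^ 2 - 1 + ε ≠ 0 := (hden r hr).ne'
    have e : r ^ 3 / (ε / 4 + r ^ 2 - 1 / 4) = r + (1 - ε) * r / (4 * r ^ 2 - 1 + ε) := by
      rw [show ε / 4 + r ^ 2 - 1 / 4 = (4 * r ^ 2 - 1 + ε) / 4 by ring, eq_comm,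
        div_div_eq_mul_div, eq_div_iff h4, add_mul, div_mul_cancel₀ _ h4]
      ring
    rw [e]
    norm_num
    ring
  rw [← integral_Ioc_eq_integral_Ioo, ← intervalIntegral.integral_of_le (by norm_num),
    intervalIntegral.integral_eq_sub_of_hasDerivAt hF]
  · norm_num
    ring
  · refine ContinuousOn.intervalIntegrable (ContinuousOn.div (by fun_prop) (by fun_prop) ?_)
    intro r hr
    linarith [hden r hr]

theorem tendsto_integral_cube_div_atTop :
    Tendsto (fun ε => ∫ r in Ioo (1 / 2 : ℝ) 1, r ^ 3 / (ε / 4 + r ^ 2 - 1 / 4))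
      (𝓝[>] 0) atTop := by
  refine Tendsto.congr' (eventually_nhdsWithin_of_forall fun ε hε =>
    (integral_cube_div_eq hε).symm) ?_
  refine tendsto_atTop_add_const_left _ _ (Tendsto.pos_mul_atTop (C := 1 / 8) (by norm_num) ?_ ?_)
  · exact tendsto_nhdsWithin_of_tendsto_nhds
      ((by fun_prop : Continuous fun ε : ℝ => (1 - ε) / 8).tendsto' 0 _ (by norm_num))
  · have hlog : Tendsto (fun ε : ℝ => log (3 + ε)) (𝓝[>] 0) (𝓝 (log 3)) :=
      tendsto_nhdsWithin_of_tendsto_nhds ((continuousAt_log (by norm_num)).tendsto.comp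
        (by simpa using (continuous_const_add (3 : ℝ)).tendsto 0))
    simp_rw [sub_eq_add_neg]
    exact hlog.add_atTop (tendsto_neg_atBot_atTop.comp tendsto_log_nhdsGT_zero)

end LowerBound

section Comparison

variable {ε : ℝ}

theorem cube_mul_sq_div_Geps_le (hε : 0 < ε) {r : ℝ} (hr : 0 < r) :
    r ^ 3 * feps ε r ^ 2 / Geps ε r ≤ r * bendingDensity ε r := by
  have hG := Geps_pos hε hr
  have h : r ^ 3 * feps ε r ^ 2 / Geps ε r = r * ((r * feps ε r) ^ 2 / Geps ε r) := by ring
  rw [h, bendingDensity, mul_add, le_add_iff_nonneg_right]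
  positivity

theorem integrableOn_cube_mul_sq_div_Geps (hε : 0 < ε) (hε1 : ε ≤ 1) :
    IntegrableOn (fun r => r ^ 3 * feps ε r ^ 2 / Geps ε r) (Ioo 0 1) := by
  refine (integrableOn_mul_bendingDensity hε hε1).mono' ?_ ?_
  · exact ((measurable_id.pow_const 3).mul ((measurable_feps ε).pow_const 2)).div
      (continuous_Geps ε).measurable |>.aestronglyMeasurable
  · filter_upwards [ae_restrict_mem measurableSet_Ioo] with r hr
    rw [Real.norm_of_nonneg (div_nonneg (mul_nonneg (pow_nonneg hr.1.le 3) (sq_nonneg _))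
      (Geps_pos hε hr.1).le)]
    exact cube_mul_sq_div_Geps_le hε hr.1

theorem integral_cube_div_le (hε : 0 < ε) (hε1 : ε ≤ 1) :
    ∫ r in Ioo (1 / 2 : ℝ) 1, r ^ 3 / (ε / 4 + r ^ 2 - 1 / 4)
      ≤ ∫ r in Ioo 0 1, r ^ 3 * feps ε r ^ 2 / Geps ε r := by
  have hcongr : ∀ r ∈ Ioo (1 / 2 : ℝ) 1,
      r ^ 3 / (ε / 4 + r ^ 2 - 1 / 4) = r ^ 3 * feps ε r ^ 2 / Geps ε r := fun r hr => by
    simp only [feps, Geps, if_neg (not_le.mpr hr.1), one_pow, mul_one]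
  rw [setIntegral_congr_fun measurableSet_Ioo hcongr]
  refine setIntegral_mono_set (integrableOn_cube_mul_sq_div_Geps hε hε1) ?_
    (Ioo_subset_Ioo_left (by norm_num)).eventuallyLE
  filter_upwards [ae_restrict_mem measurableSet_Ioo] with r hr
  exact div_nonneg (mul_nonneg (pow_nonneg hr.1.le 3) (sq_nonneg _)) (Geps_pos hε hr.1).le

theorem mul_integral_cube_div_le_integral_ball (hε : 0 < ε) (hε1 : ε ≤ 1) :
    2 * π * ∫ r in Ioo (1 / 2 : ℝ) 1, r ^ 3 / (ε / 4 + r ^ 2 - 1 / 4)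
      ≤ ∫ x in Metric.ball (0 : E2) 1, frob2 (hess (fun y => vf (feps ε) ‖y‖) x) := by
  rw [integral_ball_frob2_hess_vf_feps hε]
  gcongr
  calc _ ≤ ∫ r in Ioo 0 1, r ^ 3 * feps ε r ^ 2 / Geps ε r := integral_cube_div_le hε hε1
    _ ≤ ∫ r in Ioo 0 1, r * bendingDensity ε r :=
      setIntegral_mono_on (integrableOn_cube_mul_sq_div_Geps hε hε1)
        (integrableOn_mul_bendingDensity hε hε1) measurableSet_Ioo
        fun r hr => cube_mul_sq_div_Geps_le hε hr.1

end Comparison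

theorem tendsto_integral_ball_frob2_hess_vf_feps_atTop :
    Tendsto (fun ε => ∫ x in Metric.ball (0 : E2) 1, frob2 (hess (fun y => vf (feps ε) ‖y‖) x))
      (𝓝[>] 0) atTop := by
  refine tendsto_atTop_mono' _ ?_ (tendsto_integral_cube_div_atTop.const_mul_atTop two_pi_pos)
  filter_upwards [Ioo_mem_nhdsGT (zero_lt_one' ℝ)] with ε hε
  exact mul_integral_cube_div_le_integral_ball hε.1 hε.2.le

/-- the bending energy of the radial solution for `f_ε` blows up as `ε → 0⁺`,
while `v(x) = |x|²/2` has `det ∇²v = 1 ≥ f_ε` and energy `2π`; hence for small `ε` the radial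
solution is not a minimizer of the relaxed problem. -/
theorem stmt16 :
    (∀ ε ∈ Set.Ioo (0 : ℝ) 1,
      (∫ r in Set.Ioo ((1 : ℝ) / 2) 1, r ^ 3 / (ε / 4 + r ^ 2 - 1 / 4))
        ≤ ∫ r in Set.Ioo (0 : ℝ) 1,
            r ^ 3 * (feps ε r) ^ 2 / ∫ s in Set.Ioo (0 : ℝ) r, 2 * s * feps ε s) ∧
    Filter.Tendsto (fun ε => ∫ r in Set.Ioo ((1 : ℝ) / 2) 1, r ^ 3 / (ε / 4 + r ^ 2 - 1 / 4))
      (nhdsWithin 0 (Set.Ioi 0)) Filter.atTop ∧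
    Filter.Tendsto
      (fun ε => ∫ x in Metric.ball (0 : E2) 1, frob2 (hess (fun y => vf (feps ε) ‖y‖) x))
      (nhdsWithin 0 (Set.Ioi 0)) Filter.atTop ∧
    (∀ x : E2, hessDet (fun y => ‖y‖ ^ 2 / 2) x = 1) ∧
    (∀ ε ∈ Set.Ioo (0 : ℝ) 1, ∀ r : ℝ, feps ε r ≤ 1) ∧
    ((∫ x in Metric.ball (0 : E2) 1, frob2 (hess (fun y : E2 => ‖y‖ ^ 2 / 2) x))
      = 2 * Real.pi) ∧
    (∃ ε₀ > (0 : ℝ), ∀ ε ∈ Set.Ioo (0 : ℝ) ε₀,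
      2 * Real.pi
        < ∫ x in Metric.ball (0 : E2) 1, frob2 (hess (fun y => vf (feps ε) ‖y‖) x)) := by
  refine ⟨fun ε hε => ?_, tendsto_integral_cube_div_atTop,
    tendsto_integral_ball_frob2_hess_vf_feps_atTop, hessDet_half_norm_sq,
    fun ε hε => feps_le_one hε.2.le, integral_ball_frob2_hess_half_norm_sq, ?_⟩
  · refine (integral_cube_div_le hε.1 hε.2.le).trans_eq
      (setIntegral_congr_fun measurableSet_Ioo fun r hr => ?_)
    rw [setIntegral_Ioo_two_mul_feps ε hr.1]
  · exact (nhdsGT_basis 0).eventually_iff.mp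
      (tendsto_integral_ball_frob2_hess_vf_feps_atTop.eventually_gt_atTop (2 * π))
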